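/- arXiv:2004.06969 — 2 statements merged into one kernel-verified Lean document; each statement's English description precedes it below -/
import Mathlib

section
/- Epoch-based concurrency check: let e and f be two events in a trace T with e appearing before f, e in thread j, f in thread i, with vector clocks V1 (for e) and V2 (for f) as computed by the FastTrack-style algorithm. Then e and f are concurrent with respect to the happens-before partial order if and only if V2[j] < V1[j], i.e., the time stamp of thread j in f's clock is strictly less than the time stamp of thread j in e's clock. -/
inductive Op : Type
  | read (x : ℕ)
  | write (x : ℕ)
  | acquire (y : ℕ)
  | release (y : ℕ)
  deriving DecidableEq

structure Event : Type where
  tid : ℕ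
  uid : ℕ
  op : Op
  deriving DecidableEq

def Event.isWrite (e : Event) : Prop := ∃ x, e.op = Op.write x

def Event.isRead (e : Event) : Prop := ∃ x, e.op = Op.read x

def Event.accesses (e : Event) (x : ℕ) : Prop :=
  e.op = Op.read x ∨ e.op = Op.write x

/-- Position of an event in a trace (trace position). -/
def tracePos (T : List Event) (e : Event) : ℕ := List.idxOf e T

/-- Two events conflict: same variable, different threads, at least one write. -/
def Conflict (e f : Event) : Prop :=
  e.tid ≠ f.tid ∧ ∃ x, e.accesses x ∧ f.accesses x ∧ (e.isWrite ∨ f.isWrite)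

/-- `w` is the last write (on some variable `x`) seen by the read `r` in `T`. -/
def LastWriteOf (T : List Event) (w r : Event) : Prop :=
  w ∈ T ∧ r ∈ T ∧ ∃ x, w.op = Op.write x ∧ r.op = Op.read x ∧
    tracePos T w < tracePos T r ∧
    ∀ w' ∈ T, w'.op = Op.write x → tracePos T w' < tracePos T r →
      tracePos T w' ≤ tracePos T w

/-- `a`, `r` form a matching acquire/release pair on lock `y` (a critical section). -/
def IsCS (T : List Event) (y : ℕ) (a r : Event) : Prop :=
  a ∈ T ∧ r ∈ T ∧ a.op = Op.acquire y ∧ r.op = Op.release y ∧ a.tid = r.tid ∧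
    tracePos T a < tracePos T r ∧
    ∀ e ∈ T, (e.op = Op.acquire y ∨ e.op = Op.release y) →
      ¬ (tracePos T a < tracePos T e ∧ tracePos T e < tracePos T r)

/-- Event `e` belongs to the critical section on lock `y` given by `a`, `r`. -/
def InCS (T : List Event) (y : ℕ) (a r e : Event) : Prop :=
  IsCS T y a r ∧ e ∈ T ∧ e.tid = a.tid ∧
    tracePos T a ≤ tracePos T e ∧ tracePos T e ≤ tracePos T r

/-- The lockset of an event: the locks of all critical sections containing it. -/
def Lockset (T : List Event) (e : Event) : Set ℕ := {y | ∃ a r, InCS T y a r e}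

/-- Well-formedness of a trace: events are distinct, every release has a matching
acquire, and two acquires on the same lock are separated by a release. -/
def WellFormed (T : List Event) : Prop :=
  T.Nodup ∧
  (∀ r ∈ T, ∀ y, r.op = Op.release y → ∃ a, IsCS T y a r) ∧
  (∀ a₁ ∈ T, ∀ a₂ ∈ T, ∀ y, a₁.op = Op.acquire y → a₂.op = Op.acquire y →
    tracePos T a₁ < tracePos T a₂ →
    ∃ rl ∈ T, rl.op = Op.release y ∧ rl.tid = a₁.tid ∧
      tracePos T a₁ < tracePos T rl ∧ tracePos T rl < tracePos T a₂)

/-- `T'` is a correctly reordered prefix of `T`. -/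
structure CorrectlyReorderedPrefix (T T' : List Event) : Prop where
  nodup : T'.Nodup
  sub : ∀ e ∈ T', e ∈ T
  programOrder : ∀ i : ℕ,
    (T'.filter (fun e => e.tid = i)) <+: (T.filter (fun e => e.tid = i))
  lastWriter : ∀ r ∈ T', ∀ w, LastWriteOf T w r → w ∈ T' ∧ LastWriteOf T' w r
  lockSemantics : ∀ a₁ ∈ T', ∀ a₂ ∈ T', ∀ y,
    a₁.op = Op.acquire y → a₂.op = Op.acquire y → tracePos T' a₁ < tracePos T' a₂ →
    ∃ rl ∈ T', rl.op = Op.release y ∧ rl.tid = a₁.tid ∧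
      tracePos T' a₁ < tracePos T' rl ∧ tracePos T' rl < tracePos T' a₂

/-- `(e, f)` is a predictable race pair: `e` and `f` conflict and some correctly
reordered prefix of `T` has `e` immediately before `f`. -/
def RacePair (T : List Event) (e f : Event) : Prop :=
  Conflict e f ∧
  ∃ T', CorrectlyReorderedPrefix T T' ∧ ∃ l₁ l₂, T' = l₁ ++ e :: f :: l₂

/-- Lamport's happens-before relation: program order plus release-acquire order
of critical sections on the same lock in trace order. -/
inductive HB (T : List Event) : Event → Event → Prop
  | po {e f : Event} : e ∈ T → f ∈ T → e.tid = f.tid →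
      tracePos T e < tracePos T f → HB T e f
  | rad {y : ℕ} {a rl a' rl' : Event} : IsCS T y a rl → IsCS T y a' rl' →
      tracePos T rl < tracePos T a' → HB T rl a'
  | trans {e f g : Event} : HB T e f → HB T f g → HB T e g

/-- The vector clock computed by the FastTrack-style algorithm: the `j`-th
component of the clock of `e` counts the events of thread `j` that
happen-before (or equal) `e`. -/
noncomputable def vc (T : List Event) (e : Event) (j : ℕ) : ℕ :=
  Set.ncard {g : Event | g ∈ T ∧ g.tid = j ∧ (HB T g e ∨ g = e)}

theorem hb_lt {T : List Event} {a b : Event} (h : HB T a b) :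
    tracePos T a < tracePos T b := by
  induction h with
  | po _ _ _ h => exact h
  | rad _ _ h => exact h
  | trans _ _ ih1 ih2 => exact ih1.trans ih2

theorem pos_inj {T : List Event} {a b : Event} (ha : a ∈ T) (hb : b ∈ T)
    (h : tracePos T a = tracePos T b) : a = b := by
  unfold tracePos at h
  have h1 : T.idxOf a < T.length := List.idxOf_lt_length_iff.2 ha
  have := List.idxOf_get h1
  have h2 : T.idxOf b < T.length := List.idxOf_lt_length_iff.2 hb
  have := List.idxOf_get h2
  have : T.get ⟨T.idxOf a, h1⟩ = T.get ⟨T.idxOf b, h2⟩ := by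
    congr 1
    exact Fin.ext h
  simp_all

/-- Epoch-based concurrency check: `e` (in thread `j`, before `f` in the trace)
and `f` (in thread `i`) are HB-concurrent iff `f`'s clock at component `j` is
strictly below `e`'s clock at component `j`. -/
theorem stmt11 (T : List Event) (e f : Event) (i j : ℕ)
    (hT : WellFormed T) (he : e ∈ T) (hf : f ∈ T)
    (hpos : tracePos T e < tracePos T f) (hej : e.tid = j) (hfi : f.tid = i) :
    (¬ HB T e f ∧ ¬ HB T f e) ↔ vc T f j < vc T e j := by
  have hnfe : ¬ HB T f e := fun h => absurd (hb_lt h) (by omega)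
  have hne : e ≠ f := fun h => by subst h; omega
  have hfinE : {g : Event | g ∈ T ∧ g.tid = j ∧ (HB T g e ∨ g = e)}.Finite :=
    (List.finite_toSet T).subset (fun g hg => hg.1)
  have hfinF : {g : Event | g ∈ T ∧ g.tid = j ∧ (HB T g f ∨ g = f)}.Finite :=
    (List.finite_toSet T).subset (fun g hg => hg.1)
  constructor
  · rintro ⟨hef, -⟩
    have hsub : {g : Event | g ∈ T ∧ g.tid = j ∧ (HB T g f ∨ g = f)} ⊂
        {g : Event | g ∈ T ∧ g.tid = j ∧ (HB T g e ∨ g = e)} := by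
      constructor
      · rintro g ⟨hgT, hgj, hg⟩
        refine ⟨hgT, hgj, ?_⟩
        rcases hg with hg | rfl
        · rcases lt_trichotomy (tracePos T g) (tracePos T e) with h | h | h
          · exact Or.inl (HB.po hgT he (hgj.trans hej.symm) h)
          · exact Or.inr (pos_inj hgT he h)
          · exact absurd (HB.trans (HB.po he hgT (hej.trans hgj.symm) h) hg) hef
        · exact absurd (HB.po he hgT (hej.trans hgj.symm) hpos) hef
      · intro hsub
        have heE : e ∈ {g : Event | g ∈ T ∧ g.tid = j ∧ (HB T g e ∨ g = e)} :=
          ⟨he, hej, Or.inr rfl⟩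
        rcases hsub heE with ⟨-, -, h | h⟩
        · exact hef h
        · exact hne h
    exact Set.ncard_lt_ncard hsub hfinE
  · intro hlt
    refine ⟨fun hef => ?_, hnfe⟩
    have hsub : {g : Event | g ∈ T ∧ g.tid = j ∧ (HB T g e ∨ g = e)} ⊆
        {g : Event | g ∈ T ∧ g.tid = j ∧ (HB T g f ∨ g = f)} := by
      rintro g ⟨hgT, hgj, hg⟩
      refine ⟨hgT, hgj, Or.inl ?_⟩
      rcases hg with hg | rfl
      · exact HB.trans hg hef
      · exact hef
    have := Set.ncard_le_ncard hsub hfinF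
    unfold vc at hlt
    omega
end

section
/- Any correctly reordered prefix respects the PWR order: if T' is a correctly reordered prefix of a well-formed trace T and e <_PWR f for events e, f, then if f occurs in T', e also occurs in T' and e precedes f in T'. -/
/-- The PWR relation: smallest partial order closed under program order (PO),
write-read dependency (WRD) and release-order dependency (ROD). -/
inductive PWR (T : List Event) : Event → Event → Prop
  | po {e f : Event} : e ∈ T → f ∈ T → e.tid = f.tid →
      tracePos T e < tracePos T f → PWR T e f
  | wrd {w r : Event} : LastWriteOf T w r → PWR T w r
  | rod {y : ℕ} {a rl a' rl' e f : Event} :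
      InCS T y a rl e → InCS T y a' rl' f → a ≠ a' → PWR T e f → PWR T rl f
  | trans {e f g : Event} : PWR T e f → PWR T f g → PWR T e g

section Aux

/-- Filtering preserves relative order of elements satisfying the predicate. -/
lemma filt_mono (p : Event → Prop) [DecidablePred p] :
    ∀ (L : List Event) (e f : Event), f ∈ L → p e → p f →
      List.idxOf e L < List.idxOf f L →
      List.idxOf e (L.filter p) < List.idxOf f (L.filter p) := by
  intro L
  induction L with
  | nil => simp
  | cons a L ih =>
    intro e f hf hpe hpf hlt
    by_cases hae : a = e
    · subst hae
      have hfe : f ≠ a := by rintro rfl; simp at hlt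
      have hfL : f ∈ L := by
        rcases List.mem_cons.1 hf with h | h
        · exact absurd h hfe
        · exact h
      rw [List.filter_cons_of_pos (p := fun x => decide (p x)) (by simpa using hpe), List.idxOf_cons_self,
        List.idxOf_cons_ne _ (fun h => hfe h.symm)]
      exact Nat.succ_pos _
    · by_cases haf : a = f
      · subst haf
        rw [List.idxOf_cons_self] at hlt
        exact absurd hlt (Nat.not_lt_zero _)
      · have hfL : f ∈ L := by
          rcases List.mem_cons.1 hf with h | h
          · exact absurd h.symm haf
          · exact h
        rw [List.idxOf_cons_ne _ hae, List.idxOf_cons_ne _ haf] at hlt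
        have hlt' := Nat.lt_of_succ_lt_succ hlt
        by_cases hpa : p a
        · rw [List.filter_cons_of_pos (by simpa using hpa),
            List.idxOf_cons_ne _ hae, List.idxOf_cons_ne _ haf]
          exact Nat.succ_lt_succ (ih e f hfL hpe hpf hlt')
        · rw [List.filter_cons_of_neg (by simpa using hpa)]
          exact ih e f hfL hpe hpf hlt'

lemma prefix_indexOf_eq {P L : List Event} (h : P <+: L) {e : Event} (he : e ∈ P) :
    List.idxOf e L = List.idxOf e P := by
  obtain ⟨t, rfl⟩ := h; exact List.idxOf_append_of_mem he

lemma prefix_mem_of_indexOf_lt {P L : List Event} (h : P <+: L) {e f : Event}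
    (hf : f ∈ P) (hlt : List.idxOf e L < List.idxOf f L) : e ∈ P := by
  obtain ⟨t, rfl⟩ := h
  by_contra hne
  rw [List.idxOf_append_of_notMem hne, List.idxOf_append_of_mem hf] at hlt
  have := List.idxOf_lt_length_iff.2 hf
  omega

/-- Same-thread order in `T` transfers to `T'`. -/
lemma lemA_lt {T T' : List Event} (hT' : CorrectlyReorderedPrefix T T')
    {e f : Event} (he : e ∈ T') (hf : f ∈ T') (htid : e.tid = f.tid)
    (hlt : tracePos T e < tracePos T f) : tracePos T' e < tracePos T' f := by
  have heT := hT'.sub e he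
  have hfT := hT'.sub f hf
  have hpre := hT'.programOrder f.tid
  have h1 : List.idxOf e (T.filter (fun g => g.tid = f.tid)) <
      List.idxOf f (T.filter (fun g => g.tid = f.tid)) :=
    filt_mono _ T e f hfT htid rfl hlt
  have he' : e ∈ T'.filter (fun g => g.tid = f.tid) := by
    simp only [List.mem_filter]; exact ⟨he, by simpa using htid⟩
  have hf' : f ∈ T'.filter (fun g => g.tid = f.tid) := by
    simp only [List.mem_filter]; exact ⟨hf, by simp⟩
  rw [prefix_indexOf_eq hpre he', prefix_indexOf_eq hpre hf'] at h1
  by_contra hcon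
  push_neg at hcon
  rcases Nat.lt_or_ge (tracePos T' f) (tracePos T' e) with hc | hc
  · have h2 : List.idxOf f (T'.filter (fun g => g.tid = f.tid)) <
        List.idxOf e (T'.filter (fun g => g.tid = f.tid)) :=
      filt_mono _ T' f e he rfl htid hc
    omega
  · have hfe : e = f := by
      have heq : tracePos T' e = tracePos T' f := le_antisymm hc hcon
      exact (List.idxOf_inj he).1 heq
    subst hfe; omega

lemma lemA_le {T T' : List Event} (hT' : CorrectlyReorderedPrefix T T')
    {e f : Event} (he : e ∈ T') (hf : f ∈ T') (htid : e.tid = f.tid)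
    (hle : tracePos T e ≤ tracePos T f) : tracePos T' e ≤ tracePos T' f := by
  rcases eq_or_lt_of_le hle with h | h
  · have heq : e = f := (List.idxOf_inj (hT'.sub e he)).1 h
    subst heq; exact le_refl _
  · exact le_of_lt (lemA_lt hT' he hf htid h)

/-- Same-thread earlier events are also in the prefix. -/
lemma lemB {T T' : List Event} (hT' : CorrectlyReorderedPrefix T T')
    {e f : Event} (he : e ∈ T) (hf : f ∈ T') (htid : e.tid = f.tid)
    (hle : tracePos T e ≤ tracePos T f) : e ∈ T' := by
  rcases eq_or_lt_of_le hle with h | h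
  · have heq : e = f := (List.idxOf_inj he).1 h
    subst heq; exact hf
  · have hpre := hT'.programOrder f.tid
    have h1 : List.idxOf e (T.filter (fun g => g.tid = f.tid)) <
        List.idxOf f (T.filter (fun g => g.tid = f.tid)) :=
      filt_mono _ T e f (hT'.sub f hf) htid rfl h
    have hf' : f ∈ T'.filter (fun g => g.tid = f.tid) := by
      simp only [List.mem_filter]; exact ⟨hf, by simp⟩
    have hmem := prefix_mem_of_indexOf_lt hpre hf' h1
    simp only [List.mem_filter] at hmem
    exact hmem.1

/-- Distinct critical sections on the same lock are disjoint in the trace. -/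
lemma cs_disjoint {T : List Event} {y : ℕ} {a rl a2 rl2 : Event}
    (h1 : IsCS T y a rl) (h2 : IsCS T y a2 rl2) (hne : a ≠ a2) :
    tracePos T rl < tracePos T a2 ∨ tracePos T rl2 < tracePos T a := by
  obtain ⟨haT, hrlT, haop, hrlop, _, harl, hni⟩ := h1
  obtain ⟨haT2, hrlT2, haop2, hrlop2, _, harl2, hni2⟩ := h2
  have hpos : tracePos T a ≠ tracePos T a2 :=
    fun h => hne ((List.idxOf_inj haT).1 h)
  rcases Nat.lt_or_ge (tracePos T a) (tracePos T a2) with h | h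
  · left
    have hni0 := hni a2 haT2 (Or.inl haop2)
    have hner : a2 ≠ rl := by rintro rfl; rw [haop2] at hrlop; exact Op.noConfusion hrlop
    have hnlt : ¬ (tracePos T a2 < tracePos T rl) := fun hc => hni0 ⟨h, hc⟩
    have hne2 : tracePos T a2 ≠ tracePos T rl :=
      fun hc => hner ((List.idxOf_inj haT2).1 hc)
    omega
  · right
    have h' : tracePos T a2 < tracePos T a := by omega
    have hni0 := hni2 a haT (Or.inl haop)
    have hner : a ≠ rl2 := by rintro rfl; rw [haop] at hrlop2; exact Op.noConfusion hrlop2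
    have hnlt : ¬ (tracePos T a < tracePos T rl2) := fun hc => hni0 ⟨h', hc⟩
    have hne2 : tracePos T a ≠ tracePos T rl2 :=
      fun hc => hner ((List.idxOf_inj haT).1 hc)
    omega

/-- PWR implies trace order in the original trace. -/
lemma lemC {T : List Event} {e f : Event} (hpwr : PWR T e f) :
    e ∈ T ∧ f ∈ T ∧ tracePos T e < tracePos T f := by
  induction hpwr with
  | po he hf htid hlt => exact ⟨he, hf, hlt⟩
  | wrd hlw =>
    obtain ⟨hw, hr, x, _, _, hlt, _⟩ := hlw
    exact ⟨hw, hr, hlt⟩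
  | rod hE hF hne _ ih =>
    obtain ⟨hCS, heT, _, hae, her⟩ := hE
    obtain ⟨hCS2, hfT, _, haf, hfr⟩ := hF
    obtain ⟨_, _, hlt⟩ := ih
    rcases cs_disjoint hCS hCS2 hne with h | h
    · exact ⟨hCS.2.1, hfT, by omega⟩
    · omega
  | trans h1 h2 ih1 ih2 =>
    obtain ⟨he, _, hl1⟩ := ih1
    obtain ⟨_, hg, hl2⟩ := ih2
    exact ⟨he, hg, hl1.trans hl2⟩

end Aux

/-- Any correctly reordered prefix respects the PWR order: if `e <_PWR f` and
`f` occurs in the prefix `T'`, then `e` also occurs in `T'` and precedes `f`. -/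
theorem stmt19 (T T' : List Event) (e f : Event)
    (hT : WellFormed T) (hT' : CorrectlyReorderedPrefix T T')
    (hpwr : PWR T e f) (hf : f ∈ T') :
    e ∈ T' ∧ tracePos T' e < tracePos T' f := by
  revert hf
  induction hpwr with
  | @po e f heT hfT htid hlt =>
    intro hf
    have he' : e ∈ T' := lemB hT' heT hf htid (le_of_lt hlt)
    exact ⟨he', lemA_lt hT' he' hf htid hlt⟩
  | @wrd w r hlw =>
    intro hf
    obtain ⟨hw, hlw'⟩ := hT'.lastWriter r hf w hlw
    obtain ⟨_, _, x, _, _, hlt, _⟩ := hlw'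
    exact ⟨hw, hlt⟩
  | @rod y a rl a2 rl2 e f hE hF hane hpwr ih =>
    intro hf
    obtain ⟨he', helt⟩ := ih hf
    obtain ⟨hCS, heT, hetid, hae, her⟩ := hE
    obtain ⟨hCS2, hfT, hftid, haf, hfr⟩ := hF
    obtain ⟨haT, hrlT, haop, hrlop, hatid, harl, hni⟩ := hCS
    obtain ⟨haT2, hrlT2, haop2, hrlop2, hatid2, harl2, hni2⟩ := hCS2
    have hAmem : a ∈ T' := lemB hT' haT he' hetid.symm hae
    have hA2mem : a2 ∈ T' := lemB hT' haT2 hf hftid.symm haf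
    have hposae : tracePos T' a ≤ tracePos T' e := lemA_le hT' hAmem he' hetid.symm hae
    have hposaf : tracePos T' a2 ≤ tracePos T' f := lemA_le hT' hA2mem hf hftid.symm haf
    have hposne : tracePos T' a ≠ tracePos T' a2 :=
      fun h => hane ((List.idxOf_inj hAmem).1 h)
    have haa2 : tracePos T' a < tracePos T' a2 := by
      rcases Nat.lt_or_ge (tracePos T' a) (tracePos T' a2) with h | h
      · exact h
      · exfalso
        have h' : tracePos T' a2 < tracePos T' a := by omega
        obtain ⟨rl0, hrl0, hrl0op, hrl0tid, h1, h2⟩ :=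
          hT'.lockSemantics a2 hA2mem a hAmem y haop2 haop h'
        have hrl0T : rl0 ∈ T := hT'.sub rl0 hrl0
        have hT1 : tracePos T a2 < tracePos T rl0 := by
          by_contra hc
          push_neg at hc
          have := lemA_le hT' hrl0 hA2mem hrl0tid hc
          omega
        have hT2 : tracePos T rl2 ≤ tracePos T rl0 := by
          have hni0 := hni2 rl0 hrl0T (Or.inr hrl0op)
          by_cases hrr : rl0 = rl2
          · subst hrr; exact le_refl _
          · have hne2 : tracePos T rl0 ≠ tracePos T rl2 :=
              fun hc => hrr ((List.idxOf_inj hrl0T).1 hc)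
            have hnlt : ¬ (tracePos T rl0 < tracePos T rl2) := fun hc => hni0 ⟨hT1, hc⟩
            omega
        have hTf : tracePos T f ≤ tracePos T rl0 := by omega
        have hftidrl : f.tid = rl0.tid := by rw [hftid, ← hrl0tid]
        have := lemA_le hT' hf hrl0 hftidrl hTf
        omega
    obtain ⟨rl0, hrl0, hrl0op, hrl0tid, h1, h2⟩ :=
      hT'.lockSemantics a hAmem a2 hA2mem y haop haop2 haa2
    have hrl0T : rl0 ∈ T := hT'.sub rl0 hrl0
    have hT1 : tracePos T a < tracePos T rl0 := by
      by_contra hc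
      push_neg at hc
      have := lemA_le hT' hrl0 hAmem hrl0tid hc
      omega
    have hT2 : tracePos T rl ≤ tracePos T rl0 := by
      have hni0 := hni rl0 hrl0T (Or.inr hrl0op)
      by_cases hrr : rl0 = rl
      · subst hrr; exact le_refl _
      · have hne2 : tracePos T rl0 ≠ tracePos T rl :=
          fun hc => hrr ((List.idxOf_inj hrl0T).1 hc)
        have hnlt : ¬ (tracePos T rl0 < tracePos T rl) := fun hc => hni0 ⟨hT1, hc⟩
        omega
    have hrltid : rl.tid = rl0.tid := by rw [← hatid, ← hrl0tid]
    have hrlmem : rl ∈ T' := lemB hT' hrlT hrl0 hrltid hT2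
    have hfin : tracePos T' rl ≤ tracePos T' rl0 := lemA_le hT' hrlmem hrl0 hrltid hT2
    exact ⟨hrlmem, by omega⟩
  | trans h1 h2 ih1 ih2 =>
    intro hf
    obtain ⟨hfmid, hlt2⟩ := ih2 hf
    obtain ⟨he, hlt1⟩ := ih1 hfmid
    exact ⟨he, hlt1.trans hlt2⟩
end
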